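/- arXiv:2206.04775 — 4 statements merged into one kernel-verified Lean document; each statement's English description precedes it below -/
import Mathlib

section
/- Let 𝓕 be a fan in a finite-dimensional real vector space V. Then for every cone g ∈ 𝓕, the closure of g is strictly convex: if x ∈ closure(g) and −x ∈ closure(g), then x = 0. -/
open Set

variable {V : Type*} [NormedAddCommGroup V] [NormedSpace ℝ V]

/-- A relatively open polyhedral cone in `V`: a set cut out by finitely many linear
equations and finitely many strict linear inequalities. -/
def IsRelOpenPolyCone (c : Set V) : Prop :=
  ∃ (m p : ℕ) (α : Fin m → (V →ₗ[ℝ] ℝ)) (β : Fin p → (V →ₗ[ℝ] ℝ)),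
    c = {x : V | (∀ i, α i x = 0) ∧ ∀ j, 0 < β j x}

/-- `f` is a face of `g` relative to the family `𝓕`: either `f = g`, or `f` is a member
of `𝓕` contained in the boundary `closure g \ g` of `g` (a proper face). -/
def IsFaceOf (𝓕 : Set (Set V)) (f g : Set V) : Prop :=
  f = g ∨ (f ∈ 𝓕 ∧ f ⊆ closure g \ g)

/-- A fan in `V`: a finite family of relatively open polyhedral cones partitioning `V`,
containing `{0}`, such that the boundary of each cone is a union of cones of the family,
and such that the closure of a face `f` of a cone `g` is `span f ∩ closure g`. -/
structure IsFan (𝓕 : Set (Set V)) : Prop where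
  finite : 𝓕.Finite
  relOpenPolyCone : ∀ c ∈ 𝓕, IsRelOpenPolyCone c
  nonempty : ∀ c ∈ 𝓕, c.Nonempty
  covers : ⋃₀ 𝓕 = Set.univ
  pairwiseDisjoint : ∀ c ∈ 𝓕, ∀ d ∈ 𝓕, c ≠ d → c ∩ d = ∅
  zero_mem : ({0} : Set V) ∈ 𝓕
  boundary_eq_union_faces : ∀ g ∈ 𝓕, ∃ S ⊆ 𝓕, closure g \ g = ⋃₀ S
  closure_face : ∀ f ∈ 𝓕, ∀ g ∈ 𝓕, IsFaceOf 𝓕 f g →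
    closure f = ↑(Submodule.span ℝ f) ∩ closure g

/-- For a fan `𝓕` in a finite-dimensional real vector space, the closure of each cone
`g ∈ 𝓕` is strictly convex: it contains no nonzero vector together with its opposite. -/
theorem IsFan.strictConvex_closure [FiniteDimensional ℝ V]
    {𝓕 : Set (Set V)} (hF : IsFan 𝓕) {g : Set V} (hg : g ∈ 𝓕)
    {x : V} (hx : x ∈ closure g) (hx' : -x ∈ closure g) : x = 0 := by
  by_contra hx0
  -- find a face `f` of `g` (in `𝓕`) containing `x`
  obtain ⟨f, hf, hxf, hface⟩ : ∃ f ∈ 𝓕, x ∈ f ∧ IsFaceOf 𝓕 f g := by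
    by_cases hxg : x ∈ g
    · exact ⟨g, hg, hxg, Or.inl rfl⟩
    · obtain ⟨S, hS, hbd⟩ := hF.boundary_eq_union_faces g hg
      have hxS : x ∈ ⋃₀ S := by rw [← hbd]; exact ⟨hx, hxg⟩
      obtain ⟨f, hfS, hxf⟩ := hxS
      refine ⟨f, hS hfS, hxf, Or.inr ⟨hS hfS, fun y hy => ?_⟩⟩
      rw [hbd]; exact ⟨f, hfS, hy⟩
  -- `-x` lies in `closure f`
  have hxneg : -x ∈ closure f := by
    rw [hF.closure_face f hf g hg hface]
    exact ⟨Submodule.neg_mem _ (Submodule.subset_span hxf), hx'⟩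
  obtain ⟨m, p, α, β, hfeq⟩ := hF.relOpenPolyCone f hf
  have hclosed : IsClosed {y : V | (∀ i, α i y = 0) ∧ ∀ j, 0 ≤ β j y} := by
    have heq : {y : V | (∀ i, α i y = 0) ∧ ∀ j, 0 ≤ β j y} =
        (⋂ i, {y | α i y = 0}) ∩ ⋂ j, {y | 0 ≤ β j y} := by
      ext y; simp [Set.mem_iInter]
    rw [heq]
    exact (isClosed_iInter fun i =>
        isClosed_eq (α i).continuous_of_finiteDimensional continuous_const).inter
      (isClosed_iInter fun j =>
        isClosed_le continuous_const (β j).continuous_of_finiteDimensional)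
  have hsub : closure f ⊆ {y : V | (∀ i, α i y = 0) ∧ ∀ j, 0 ≤ β j y} := by
    apply closure_minimal _ hclosed
    rw [hfeq]; intro y hy; exact ⟨hy.1, fun j => (hy.2 j).le⟩
  -- there are no strict inequalities, so `f` contains `0`
  have hβ : ∀ j : Fin p, False := fun j => by
    have h1 : 0 < β j x := ((hfeq ▸ hxf : x ∈ {x : V | (∀ i, α i x = 0) ∧ ∀ j, 0 < β j x})).2 j
    have h2 : 0 ≤ β j (-x) := (hsub hxneg).2 j
    rw [map_neg] at h2; linarith
  have h0f : (0 : V) ∈ f := by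
    rw [hfeq]; exact ⟨fun i => map_zero _, fun j => (hβ j).elim⟩
  rcases eq_or_ne f {0} with h | h
  · rw [h] at hxf; exact hx0 hxf
  · have hdisj := hF.pairwiseDisjoint f hf {0} hF.zero_mem h
    have : (0 : V) ∈ f ∩ ({0} : Set V) := ⟨h0f, rfl⟩
    rw [hdisj] at this
    exact this
end

section
/- Let 𝓕 be a fan in a finite-dimensional real vector space V, let g ∈ 𝓕, and let f be a relatively open polyhedral cone in V. Then the following are equivalent: (i) f is a face of g, i.e. f = g, or f is a cone of 𝓕 contained in closure(g) \ g; (ii) there exists a linear form α ∈ V* such that α(x) ≥ 0 for every x ∈ g and closure(f) = (ker α) ∩ closure(g). -/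
open Set

variable {V : Type*} [NormedAddCommGroup V] [NormedSpace ℝ V]

/-- A cone in "normal form": equalities indexed by a finset `t`, strict inequalities by `u`. -/
def polyCone {κ : Type} (γ : κ → (V →ₗ[ℝ] ℝ)) (t u : Finset κ) : Set V :=
  {x | (∀ k ∈ t, γ k x = 0) ∧ ∀ k ∈ u, 0 < γ k x}

def polyConeCl {κ : Type} (γ : κ → (V →ₗ[ℝ] ℝ)) (t u : Finset κ) : Set V :=
  {x | (∀ k ∈ t, γ k x = 0) ∧ ∀ k ∈ u, 0 ≤ γ k x}

lemma isRelOpenPolyCone_polyCone {κ : Type} (γ : κ → (V →ₗ[ℝ] ℝ)) (t u : Finset κ) :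
    IsRelOpenPolyCone (polyCone γ t u) := by
  refine ⟨t.card, u.card, fun i => γ (t.equivFin.symm i), fun j => γ (u.equivFin.symm j), ?_⟩
  ext x
  simp only [polyCone, Set.mem_setOf_eq]
  constructor
  · rintro ⟨h1, h2⟩
    exact ⟨fun i => h1 _ (t.equivFin.symm i).2, fun j => h2 _ (u.equivFin.symm j).2⟩
  · rintro ⟨h1, h2⟩
    refine ⟨fun k hk => ?_, fun k hk => ?_⟩
    · have := h1 (t.equivFin ⟨k, hk⟩); simpa using this
    · have := h2 (u.equivFin ⟨k, hk⟩); simpa using this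

lemma IsRelOpenPolyCone.exists_polyCone {c : Set V} (h : IsRelOpenPolyCone c) :
    ∃ (κ : Type) (γ : κ → (V →ₗ[ℝ] ℝ)) (t u : Finset κ), c = polyCone γ t u := by
  obtain ⟨m, p, a, b, rfl⟩ := h
  refine ⟨Fin m ⊕ Fin p, Sum.elim a b, Finset.univ.image Sum.inl, Finset.univ.image Sum.inr, ?_⟩
  ext x
  simp only [polyCone, Set.mem_setOf_eq, Finset.mem_image, Finset.mem_univ, true_and]
  constructor
  · rintro ⟨h1, h2⟩
    refine ⟨?_, ?_⟩
    · rintro k ⟨i, rfl⟩; exact h1 i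
    · rintro k ⟨j, rfl⟩; exact h2 j
  · rintro ⟨h1, h2⟩
    exact ⟨fun i => h1 (Sum.inl i) ⟨i, rfl⟩, fun j => h2 (Sum.inr j) ⟨j, rfl⟩⟩

lemma isClosed_polyConeCl [FiniteDimensional ℝ V] {κ : Type} (γ : κ → (V →ₗ[ℝ] ℝ))
    (t u : Finset κ) : IsClosed (polyConeCl γ t u) := by
  have h : polyConeCl γ t u =
      (⋂ k ∈ (t : Set κ), {x : V | γ k x = 0}) ∩ ⋂ k ∈ (u : Set κ), {x : V | 0 ≤ γ k x} := by
    ext x; simp [polyConeCl]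
  rw [h]
  exact (isClosed_biInter fun k _ =>
      isClosed_eq (γ k).continuous_of_finiteDimensional continuous_const).inter
    (isClosed_biInter fun k _ =>
      isClosed_le continuous_const (γ k).continuous_of_finiteDimensional)

lemma closure_polyCone_subset [FiniteDimensional ℝ V] {κ : Type} (γ : κ → (V →ₗ[ℝ] ℝ))
    (t u : Finset κ) : closure (polyCone γ t u) ⊆ polyConeCl γ t u :=
  closure_minimal (fun _ hx => ⟨hx.1, fun k hk => (hx.2 k hk).le⟩) (isClosed_polyConeCl γ t u)

lemma closure_polyCone [FiniteDimensional ℝ V] {κ : Type} {γ : κ → (V →ₗ[ℝ] ℝ)}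
    {t u : Finset κ} (hne : (polyCone γ t u).Nonempty) :
    closure (polyCone γ t u) = polyConeCl γ t u := by
  refine subset_antisymm (closure_polyCone_subset γ t u) ?_
  obtain ⟨x₀, hx₀⟩ := hne
  intro y hy
  have cont : Filter.Tendsto (fun s : ℝ => y + s • (x₀ - y)) (nhdsWithin 0 (Set.Ioi 0)) (nhds y) := by
    have h : Continuous (fun s : ℝ => y + s • (x₀ - y)) :=
      continuous_const.add (continuous_id.smul continuous_const)
    have h0 := h.tendsto 0
    simp only [zero_smul, add_zero] at h0
    exact h0.mono_left nhdsWithin_le_nhds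
  refine mem_closure_of_tendsto cont ?_
  filter_upwards [Ioc_mem_nhdsGT_of_mem (Set.mem_Ico.mpr ⟨le_refl (0:ℝ), zero_lt_one⟩)] with s hs
  obtain ⟨hs0, hs1⟩ := hs
  refine ⟨fun k hk => ?_, fun k hk => ?_⟩
  · simp [map_add, map_smul, map_sub, hy.1 k hk, hx₀.1 k hk]
  · have h1 : 0 ≤ γ k y := hy.2 k hk
    have h2 : 0 < γ k x₀ := hx₀.2 k hk
    have : γ k (y + s • (x₀ - y)) = (1 - s) * γ k y + s * γ k x₀ := by
      simp [map_add, map_smul, map_sub, smul_eq_mul]; ring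
    rw [this]
    nlinarith

lemma polyCone_perturb [FiniteDimensional ℝ V] {κ : Type} (γ : κ → (V →ₗ[ℝ] ℝ))
    (u : Finset κ) (x v : V) (hx : ∀ k ∈ u, 0 < γ k x) :
    ∃ δ > 0, ∀ ε : ℝ, |ε| < δ → ∀ k ∈ u, 0 < γ k (x + ε • v) := by
  have hopen : IsOpen {ε : ℝ | ∀ k ∈ u, 0 < γ k (x + ε • v)} := by
    have h : {ε : ℝ | ∀ k ∈ u, 0 < γ k (x + ε • v)} =
        ⋂ k ∈ u, {ε : ℝ | 0 < γ k (x + ε • v)} := by ext; simp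
    rw [h]
    exact isOpen_biInter_finset fun k _ =>
      isOpen_lt continuous_const ((γ k).continuous_of_finiteDimensional.comp
        (continuous_const.add (continuous_id.smul continuous_const)))
  have h0 : (0:ℝ) ∈ {ε : ℝ | ∀ k ∈ u, 0 < γ k (x + ε • v)} := by
    simpa using hx
  obtain ⟨δ, hδ, hball⟩ := Metric.isOpen_iff.mp hopen 0 h0
  exact ⟨δ, hδ, fun ε hε => hball (by simpa [Real.dist_eq] using hε)⟩

lemma IsRelOpenPolyCone.zero_on [FiniteDimensional ℝ V] {c : Set V} (hc : IsRelOpenPolyCone c)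
    (δ : V →ₗ[ℝ] ℝ) (hpos : ∀ y ∈ c, 0 ≤ δ y) {x : V} (hx : x ∈ c) (hx0 : δ x = 0) :
    ∀ y ∈ c, δ y = 0 := by
  obtain ⟨κ, γ, t, u, rfl⟩ := hc.exists_polyCone
  intro y hy
  obtain ⟨d, hd, h⟩ := polyCone_perturb γ u x (x - y) hx.2
  have hε : |d/2| < d := by rw [abs_of_pos (by linarith)]; linarith
  have hz : x + (d/2) • (x - y) ∈ polyCone γ t u := by
    refine ⟨fun k hk => ?_, h (d/2) hε⟩
    simp [map_add, map_smul, map_sub, hx.1 k hk, hy.1 k hk]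
  have h1 := hpos _ hz
  have h2 : δ (x + (d/2) • (x - y)) = -((d/2) * δ y) := by
    simp [map_add, map_smul, map_sub, smul_eq_mul, hx0]
  rw [h2] at h1
  have h3 := hpos y hy
  nlinarith

lemma polyCone_subset_of_closure_eq [FiniteDimensional ℝ V] {c d : Set V}
    (hc : IsRelOpenPolyCone c) (hd : IsRelOpenPolyCone d) (hdne : d.Nonempty)
    (h : closure c = closure d) : c ⊆ d := by
  obtain ⟨κ, γ, t, u, rfl⟩ := hc.exists_polyCone
  obtain ⟨κ', γ', t', u', rfl⟩ := hd.exists_polyCone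
  intro x hx
  obtain ⟨y, hy⟩ := hdne
  have hxcl : x ∈ polyConeCl γ' t' u' :=
    closure_polyCone_subset γ' t' u' (h ▸ subset_closure hx)
  have hycl : y ∈ polyConeCl γ t u :=
    closure_polyCone_subset γ t u (h.symm ▸ subset_closure hy)
  refine ⟨hxcl.1, fun k hk => ?_⟩
  rcases (hxcl.2 k hk).lt_or_eq with hlt | heq
  · exact hlt
  · exfalso
    obtain ⟨dd, hdd, h6⟩ := polyCone_perturb γ u x (x - y) hx.2
    have hε : |dd/2| < dd := by rw [abs_of_pos (by linarith)]; linarith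
    have hz : x + (dd/2) • (x - y) ∈ polyCone γ t u := by
      refine ⟨fun j hj => ?_, h6 (dd/2) hε⟩
      simp [map_add, map_smul, map_sub, hx.1 j hj, hycl.1 j hj]
    have hzcl : x + (dd/2) • (x - y) ∈ polyConeCl γ' t' u' :=
      closure_polyCone_subset γ' t' u' (h ▸ subset_closure hz)
    have h7 := hzcl.2 k hk
    have h8 : γ' k (x + (dd/2) • (x - y)) = -((dd/2) * γ' k y) := by
      simp [map_add, map_smul, map_sub, smul_eq_mul, ← heq]
    rw [h8] at h7
    have h9 : 0 < γ' k y := hy.2 k hk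
    nlinarith

lemma IsRelOpenPolyCone.eq_of_closure_eq [FiniteDimensional ℝ V] {c d : Set V}
    (hc : IsRelOpenPolyCone c) (hd : IsRelOpenPolyCone d) (hcne : c.Nonempty) (hdne : d.Nonempty)
    (h : closure c = closure d) : c = d :=
  subset_antisymm (polyCone_subset_of_closure_eq hc hd hdne h)
    (polyCone_subset_of_closure_eq hd hc hcne h.symm)


lemma not_covering {M : Type*} [AddCommGroup M] [Module ℝ M] {ι : Type*} [DecidableEq ι] :
    ∀ (s : Finset ι) (U : ι → Submodule ℝ M), (∀ i ∈ s, U i ≠ ⊤) →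
      (∀ w : M, ∃ i ∈ s, w ∈ U i) → False := by
  intro s
  induction s using Finset.induction_on with
  | empty =>
    intro U _ hcov
    obtain ⟨i, hi, _⟩ := hcov 0
    exact absurd hi (Finset.notMem_empty i)
  | @insert a s ha ih =>
    intro U hU hcov
    obtain ⟨u, hu⟩ : ∃ u : M, u ∉ U a := by
      by_contra h
      push_neg at h
      exact hU a (Finset.mem_insert_self a s) (Submodule.eq_top_iff'.mpr h)
    refine ih U (fun i hi => hU i (Finset.mem_insert_of_mem hi)) (fun w => ?_)
    have hch : ∀ n : ℕ, ∃ i, i ∈ insert a s ∧ w + (n:ℝ) • u ∈ U i := by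
      intro n
      obtain ⟨i, hi, hmem⟩ := hcov (w + (n:ℝ) • u)
      exact ⟨i, hi, hmem⟩
    choose f hf1 hf2 using hch
    have hpig : ∃ n m : ℕ, n ≠ m ∧ f n = f m := by
      have hfin : Finite {i // i ∈ insert a s} := Finite.of_fintype _
      obtain ⟨n, m, hnm, hmm⟩ :=
        Finite.exists_ne_map_eq_of_infinite (fun n : ℕ => (⟨f n, hf1 n⟩ : {i // i ∈ insert a s}))
      exact ⟨n, m, hnm, congrArg Subtype.val hmm⟩
    obtain ⟨n, m, hnm, hfe⟩ := hpig
    have h1 : w + (n:ℝ) • u ∈ U (f n) := hf2 n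
    have h2 : w + (m:ℝ) • u ∈ U (f n) := hfe ▸ hf2 m
    have hsub : ((n:ℝ) - (m:ℝ)) • u ∈ U (f n) := by
      have h3 := (U (f n)).sub_mem h1 h2
      have h4 : (w + (n:ℝ) • u) - (w + (m:ℝ) • u) = ((n:ℝ) - (m:ℝ)) • u := by
        rw [sub_smul]; abel
      rwa [h4] at h3
    have hne : (n:ℝ) - (m:ℝ) ≠ 0 := sub_ne_zero.mpr (by exact_mod_cast hnm)
    have humem : u ∈ U (f n) := by
      have h5 := (U (f n)).smul_mem ((n:ℝ) - (m:ℝ))⁻¹ hsub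
      rwa [inv_smul_smul₀ hne] at h5
    have hia : f n ≠ a := fun h => hu (h ▸ humem)
    have his : f n ∈ s := (Finset.mem_insert.mp (hf1 n)).resolve_left hia
    have hw : w ∈ U (f n) := by
      have h6 := (U (f n)).sub_mem h1 ((U (f n)).smul_mem (n:ℝ) humem)
      simpa using h6
    exact ⟨f n, his, hw⟩

lemma IsFan.coneAt_mem [FiniteDimensional ℝ V] {𝓕 : Set (Set V)} (hF : IsFan 𝓕)
    {g : Set V} (hg : g ∈ 𝓕) {κ : Type} [DecidableEq κ] (γ : κ → (V →ₗ[ℝ] ℝ)) (t u : Finset κ)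
    (hgC : g = polyCone γ t u) {x : V} (hxcl : x ∈ closure g) (hxg : x ∉ g) :
    polyCone γ (t ∪ u.filter fun k => γ k x = 0) (u.filter fun k => ¬ γ k x = 0) ∈ 𝓕 := by
  classical
  subst hgC
  set t' : Finset κ := t ∪ u.filter (fun k => γ k x = 0) with ht'
  set u' : Finset κ := u.filter (fun k => ¬ γ k x = 0) with hu'
  set e : Set V := polyCone γ t' u' with he
  have hgne : (polyCone γ t u).Nonempty := hF.nonempty _ hg
  have hclg : closure (polyCone γ t u) = polyConeCl γ t u := closure_polyCone hgne
  have hx' : x ∈ polyConeCl γ t u := hclg ▸ hxcl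
  have hxe : x ∈ e := by
    refine ⟨fun k hk => ?_, fun k hk => ?_⟩
    · rcases Finset.mem_union.mp hk with hk | hk
      · exact hx'.1 k hk
      · exact (Finset.mem_filter.mp hk).2
    · have hk' := Finset.mem_filter.mp hk
      exact lt_of_le_of_ne (hx'.2 k hk'.1) (Ne.symm hk'.2)
  obtain ⟨k₀, hk₀u, hk₀⟩ : ∃ k ∈ u, γ k x = 0 := by
    by_contra hcon
    push_neg at hcon
    exact hxg ⟨hx'.1, fun k hk => lt_of_le_of_ne (hx'.2 k hk) (Ne.symm (hcon k hk))⟩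
  obtain ⟨S, hS𝓕, hSbd⟩ := hF.boundary_eq_union_faces _ hg
  have hesubCl : e ⊆ polyConeCl γ t u := by
    intro y hy
    refine ⟨fun k hk => hy.1 k (Finset.mem_union_left _ hk), fun k hk => ?_⟩
    by_cases h0 : γ k x = 0
    · exact (hy.1 k (Finset.mem_union_right _ (Finset.mem_filter.mpr ⟨hk, h0⟩))).ge
    · exact (hy.2 k (Finset.mem_filter.mpr ⟨hk, h0⟩)).le
  have hediff : e ⊆ closure (polyCone γ t u) \ polyCone γ t u := by
    intro y hy
    refine ⟨hclg ▸ hesubCl hy, fun hyg => ?_⟩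
    have h1 := hyg.2 k₀ hk₀u
    have h2 : γ k₀ y = 0 := hy.1 k₀ (Finset.mem_union_right _ (Finset.mem_filter.mpr ⟨hk₀u, hk₀⟩))
    linarith
  have hdsub : ∀ d ∈ S, ∀ y ∈ d, y ∈ e → d ⊆ e := by
    intro d hdS y hyd hye v hvd
    have hd𝓕 := hS𝓕 hdS
    have hdcl : ∀ w ∈ d, w ∈ polyConeCl γ t u := by
      intro w hw
      have hw2 : w ∈ ⋃₀ S := ⟨d, hdS, hw⟩
      rw [← hSbd] at hw2
      exact hclg ▸ hw2.1
    refine ⟨fun k hk => ?_, fun k hk => ?_⟩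
    · rcases Finset.mem_union.mp hk with hk | hk
      · exact (hdcl v hvd).1 k hk
      · have hk' := Finset.mem_filter.mp hk
        have h0 : γ k y = 0 := hye.1 k (Finset.mem_union_right _ hk)
        exact (hF.relOpenPolyCone d hd𝓕).zero_on (γ k)
          (fun w hw => (hdcl w hw).2 k hk'.1) hyd h0 v hvd
    · have hk' := Finset.mem_filter.mp hk
      rcases ((hdcl v hvd).2 k hk'.1).lt_or_eq with h | h
      · exact h
      · exfalso
        have h0 := (hF.relOpenPolyCone d hd𝓕).zero_on (γ k)
          (fun w hw => (hdcl w hw).2 k hk'.1) hvd h.symm y hyd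
        have hy' : 0 < γ k y := hye.2 k hk
        linarith
  set D : Set (Set V) := {d | d ∈ S ∧ d ⊆ e} with hD
  have hDfin : D.Finite := (hF.finite.subset hS𝓕).subset fun d hd => hd.1
  have hcovD : e ⊆ ⋃₀ D := by
    intro y hy
    have hy2 : y ∈ ⋃₀ S := hSbd ▸ hediff hy
    obtain ⟨d, hdS, hyd⟩ := hy2
    exact ⟨d, ⟨hdS, hdsub d hdS y hyd hy⟩, hyd⟩
  set W : Submodule ℝ V := ⨅ k ∈ t', LinearMap.ker (γ k) with hW
  have hWmem : ∀ v : V, v ∈ W ↔ ∀ k ∈ t', γ k v = 0 := by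
    intro v
    simp [hW, Submodule.mem_iInf, LinearMap.mem_ker]
  have hspan : ∃ d ∈ D, W ≤ Submodule.span ℝ d := by
    by_contra hnot
    push_neg at hnot
    refine not_covering hDfin.toFinset (fun d => (Submodule.span ℝ d).comap W.subtype) ?_ ?_
    · intro d hd htop
      have hdD : d ∈ D := hDfin.mem_toFinset.mp hd
      refine hnot d hdD fun v hv => ?_
      have h1 : (⟨v, hv⟩ : W) ∈ (Submodule.span ℝ d).comap W.subtype :=
        Submodule.eq_top_iff'.mp htop _
      simpa [Submodule.mem_comap] using h1
    · intro w
      obtain ⟨δ, hδ, hpert⟩ := polyCone_perturb γ u' x (w : V) hxe.2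
      have hpt : ∀ ε : ℝ, |ε| < δ → x + ε • (w : V) ∈ e := by
        intro ε hε
        refine ⟨fun k hk => ?_, hpert ε hε⟩
        have h1 : γ k x = 0 := hxe.1 k hk
        have h2 : γ k (w : V) = 0 := (hWmem _).mp w.2 k hk
        simp [map_add, map_smul, h1, h2]
      have hch : ∀ n : ℕ, ∃ d, d ∈ hDfin.toFinset ∧ x + (δ/(n+2)) • (w : V) ∈ d := by
        intro n
        have hn2 : (0:ℝ) < (n:ℝ) + 2 := by positivity
        have hlt : |δ/((n:ℝ)+2)| < δ := by
          rw [abs_of_pos (by positivity)]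
          rw [div_lt_iff₀ hn2]
          nlinarith
        obtain ⟨d, hdD, hptd⟩ := hcovD (hpt _ hlt)
        exact ⟨d, hDfin.mem_toFinset.mpr hdD, hptd⟩
      choose f hf1 hf2 using hch
      have hpig : ∃ n m : ℕ, n ≠ m ∧ f n = f m := by
        obtain ⟨n, m, hnm, hmm⟩ := Finite.exists_ne_map_eq_of_infinite
          (fun n : ℕ => (⟨f n, hf1 n⟩ : {d // d ∈ hDfin.toFinset}))
        exact ⟨n, m, hnm, congrArg Subtype.val hmm⟩
      obtain ⟨n, m, hnm, hfe⟩ := hpig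
      refine ⟨f n, hf1 n, ?_⟩
      rw [Submodule.mem_comap]
      have h1 : x + (δ/((n:ℝ)+2)) • (w : V) ∈ Submodule.span ℝ (f n) :=
        Submodule.subset_span (hf2 n)
      have h2 : x + (δ/((m:ℝ)+2)) • (w : V) ∈ Submodule.span ℝ (f n) :=
        hfe ▸ Submodule.subset_span (hf2 m)
      have hsub : (δ/((n:ℝ)+2) - δ/((m:ℝ)+2)) • (w : V) ∈ Submodule.span ℝ (f n) := by
        have h3 := Submodule.sub_mem _ h1 h2
        have h4 : (x + (δ/((n:ℝ)+2)) • (w : V)) - (x + (δ/((m:ℝ)+2)) • (w : V)) =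
            (δ/((n:ℝ)+2) - δ/((m:ℝ)+2)) • (w : V) := by
          rw [sub_smul]; abel
        rwa [h4] at h3
      have hne0 : δ/((n:ℝ)+2) - δ/((m:ℝ)+2) ≠ 0 := by
        have hn2 : (0:ℝ) < (n:ℝ) + 2 := by positivity
        have hm2 : (0:ℝ) < (m:ℝ) + 2 := by positivity
        rw [sub_ne_zero]
        intro hcon
        rw [div_eq_div_iff hn2.ne' hm2.ne'] at hcon
        have hnm' : (n:ℝ) = (m:ℝ) := by nlinarith
        exact hnm (by exact_mod_cast hnm')
      have h5 := Submodule.smul_mem _ (δ/((n:ℝ)+2) - δ/((m:ℝ)+2))⁻¹ hsub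
      rwa [inv_smul_smul₀ hne0] at h5
  obtain ⟨d₀, hd₀D, hWle⟩ := hspan
  have hspanle : Submodule.span ℝ d₀ ≤ W :=
    Submodule.span_le.mpr fun v hv => (hWmem v).mpr (hd₀D.2 hv).1
  have hspanEq : Submodule.span ℝ d₀ = W := le_antisymm hspanle hWle
  have hd₀𝓕 := hS𝓕 hd₀D.1
  have hface : IsFaceOf 𝓕 d₀ (polyCone γ t u) := by
    refine Or.inr ⟨hd₀𝓕, ?_⟩
    rw [hSbd]
    exact Set.subset_sUnion_of_mem hd₀D.1
  have hclosd₀ := hF.closure_face d₀ hd₀𝓕 _ hg hface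
  have hcle : closure e = polyConeCl γ t' u' := closure_polyCone ⟨x, hxe⟩
  have hkey : closure d₀ = polyConeCl γ t' u' := by
    rw [hclosd₀, hspanEq, hclg]
    ext v
    simp only [Set.mem_inter_iff, SetLike.mem_coe, hWmem, polyConeCl, Set.mem_setOf_eq]
    constructor
    · rintro ⟨h1, _, h3⟩
      exact ⟨h1, fun k hk => h3 k (Finset.mem_filter.mp hk).1⟩
    · rintro ⟨h1, h2⟩
      refine ⟨h1, fun k hk => h1 k (Finset.mem_union_left _ hk), fun k hk => ?_⟩
      by_cases h0 : γ k x = 0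
      · exact (h1 k (Finset.mem_union_right _ (Finset.mem_filter.mpr ⟨hk, h0⟩))).ge
      · exact h2 k (Finset.mem_filter.mpr ⟨hk, h0⟩)
  have hd₀e : d₀ = e := (hF.relOpenPolyCone _ hd₀𝓕).eq_of_closure_eq
    (isRelOpenPolyCone_polyCone γ t' u') (hF.nonempty _ hd₀𝓕) ⟨x, hxe⟩ (hkey.trans hcle.symm)
  exact hd₀e ▸ hd₀𝓕

/-- Let `𝓕` be a fan in a finite-dimensional real vector space `V`, let `g ∈ 𝓕`, and let
`f` be a relatively open polyhedral cone in `V`. Then `f` is a face of `g` if and only if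
there exists a linear form `α` on `V` which is nonnegative on `g` and such that
`closure f = ker α ∩ closure g`. -/
theorem IsFan.isFaceOf_iff [FiniteDimensional ℝ V]
    {𝓕 : Set (Set V)} (hF : IsFan 𝓕) {g : Set V} (hg : g ∈ 𝓕)
    {f : Set V} (hf : IsRelOpenPolyCone f) :
    IsFaceOf 𝓕 f g ↔
      ∃ α : V →ₗ[ℝ] ℝ, (∀ x ∈ g, 0 ≤ α x) ∧
        closure f = {x : V | α x = 0} ∩ closure g := by
  classical
  obtain ⟨κ, γ, t, u, hgC⟩ := (hF.relOpenPolyCone g hg).exists_polyCone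
  have hgne := hF.nonempty g hg
  have hclg : closure g = polyConeCl γ t u := by
    rw [hgC]; exact closure_polyCone (hgC ▸ hgne)
  constructor
  · rintro (rfl | ⟨hf𝓕, hfsub⟩)
    · refine ⟨0, fun x _ => by simp, ?_⟩
      have h0 : {x : V | (0 : V →ₗ[ℝ] ℝ) x = 0} = Set.univ := by ext; simp
      rw [h0, Set.univ_inter]
    · obtain ⟨x, hxf⟩ := hF.nonempty f hf𝓕
      have hxb := hfsub hxf
      set zeros : Finset κ := u.filter (fun k => γ k x = 0) with hzeros
      set t' : Finset κ := t ∪ zeros with ht'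
      set u' : Finset κ := u.filter (fun k => ¬ γ k x = 0) with hu'
      have he𝓕 : polyCone γ t' u' ∈ 𝓕 := hF.coneAt_mem hg γ t u hgC hxb.1 hxb.2
      have hx' : x ∈ polyConeCl γ t u := by rw [← hclg]; exact hxb.1
      have hxe : x ∈ polyCone γ t' u' := by
        refine ⟨fun k hk => ?_, fun k hk => ?_⟩
        · rcases Finset.mem_union.mp hk with hk | hk
          · exact hx'.1 k hk
          · exact (Finset.mem_filter.mp hk).2
        · have hk' := Finset.mem_filter.mp hk
          exact lt_of_le_of_ne (hx'.2 k hk'.1) (Ne.symm hk'.2)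
      have hfe : f = polyCone γ t' u' := by
        by_contra hne
        have hdisj := hF.pairwiseDisjoint f hf𝓕 _ he𝓕 hne
        exact absurd hdisj (Set.Nonempty.ne_empty ⟨x, hxf, hxe⟩)
      refine ⟨∑ k ∈ zeros, γ k, ?_, ?_⟩
      · intro y hyg
        rw [LinearMap.sum_apply]
        refine Finset.sum_nonneg fun k hk => ?_
        rw [hgC] at hyg
        exact (hyg.2 k (Finset.mem_filter.mp hk).1).le
      · rw [hfe, closure_polyCone ⟨x, hxe⟩, hclg]
        ext y
        simp only [polyConeCl, Set.mem_setOf_eq, Set.mem_inter_iff]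
        constructor
        · rintro ⟨h1, h2⟩
          refine ⟨?_, fun k hk => h1 k (Finset.mem_union_left _ hk), fun k hk => ?_⟩
          · rw [LinearMap.sum_apply]
            exact Finset.sum_eq_zero fun k hk => h1 k (Finset.mem_union_right _ hk)
          · by_cases h0 : γ k x = 0
            · exact (h1 k (Finset.mem_union_right _ (Finset.mem_filter.mpr ⟨hk, h0⟩))).ge
            · exact h2 k (Finset.mem_filter.mpr ⟨hk, h0⟩)
        · rintro ⟨hα, h1, h2⟩
          rw [LinearMap.sum_apply] at hα
          have hzero : ∀ k ∈ zeros, γ k y = 0 :=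
            (Finset.sum_eq_zero_iff_of_nonneg
              (fun k hk => h2 k (Finset.mem_filter.mp hk).1)).mp hα
          refine ⟨fun k hk => ?_, fun k hk => h2 k (Finset.mem_filter.mp hk).1⟩
          rcases Finset.mem_union.mp hk with hk | hk
          · exact h1 k hk
          · exact hzero k hk
  · rintro ⟨α, hα, hcl⟩
    have hαcl : ∀ y ∈ closure g, 0 ≤ α y := fun y hy =>
      closure_minimal (fun z hz => hα z hz)
        (isClosed_le continuous_const α.continuous_of_finiteDimensional) hy
    have h0cl : (0:V) ∈ closure g := by
      rw [hclg]; exact ⟨fun k _ => by simp, fun k _ => by simp⟩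
    have hfne : f.Nonempty := by
      rcases f.eq_empty_or_nonempty with h | h
      · exfalso
        have h0f : (0:V) ∈ closure f := by
          rw [hcl]; exact ⟨by simp, h0cl⟩
        rw [h, closure_empty] at h0f
        exact h0f
      · exact h
    obtain ⟨x, hxf⟩ := hfne
    have hxcl' : x ∈ {x : V | α x = 0} ∩ closure g := by
      rw [← hcl]; exact subset_closure hxf
    have hαx : α x = 0 := hxcl'.1
    have hxclg : x ∈ closure g := hxcl'.2
    by_cases hxg : x ∈ g
    · left
      have hzg : ∀ y ∈ g, α y = 0 := (hF.relOpenPolyCone g hg).zero_on α hα hxg hαx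
      have hclsub : closure g ⊆ {y : V | α y = 0} :=
        closure_minimal hzg (isClosed_eq α.continuous_of_finiteDimensional continuous_const)
      have hclfg : closure f = closure g := by
        rw [hcl]; exact Set.inter_eq_right.mpr hclsub
      exact hf.eq_of_closure_eq (hF.relOpenPolyCone g hg) ⟨x, hxf⟩ hgne hclfg
    · have he𝓕 : polyCone γ (t ∪ u.filter fun k => γ k x = 0)
          (u.filter fun k => ¬ γ k x = 0) ∈ 𝓕 := hF.coneAt_mem hg γ t u hgC hxclg hxg
      set zeros : Finset κ := u.filter (fun k => γ k x = 0) with hzeros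
      set t' : Finset κ := t ∪ zeros with ht'
      set u' : Finset κ := u.filter (fun k => ¬ γ k x = 0) with hu'
      set e : Set V := polyCone γ t' u' with he
      have hx' : x ∈ polyConeCl γ t u := by rw [← hclg]; exact hxclg
      have hxe : x ∈ e := by
        refine ⟨fun k hk => ?_, fun k hk => ?_⟩
        · rcases Finset.mem_union.mp hk with hk | hk
          · exact hx'.1 k hk
          · exact (Finset.mem_filter.mp hk).2
        · have hk' := Finset.mem_filter.mp hk
          exact lt_of_le_of_ne (hx'.2 k hk'.1) (Ne.symm hk'.2)
      obtain ⟨k₀, hk₀u, hk₀⟩ : ∃ k ∈ u, γ k x = 0 := by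
        by_contra hcon
        push_neg at hcon
        refine hxg ?_
        rw [hgC]
        exact ⟨hx'.1, fun k hk => lt_of_le_of_ne (hx'.2 k hk) (Ne.symm (hcon k hk))⟩
      have hesubCl : e ⊆ polyConeCl γ t u := by
        intro y hy
        refine ⟨fun k hk => hy.1 k (Finset.mem_union_left _ hk), fun k hk => ?_⟩
        by_cases h0 : γ k x = 0
        · exact (hy.1 k (Finset.mem_union_right _ (Finset.mem_filter.mpr ⟨hk, h0⟩))).ge
        · exact (hy.2 k (Finset.mem_filter.mpr ⟨hk, h0⟩)).le
      have hcle : closure e = polyConeCl γ t' u' := closure_polyCone ⟨x, hxe⟩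
      have hfsubclg : f ⊆ closure g := fun y hy => by
        have := subset_closure hy
        rw [hcl] at this
        exact this.2
      have hfCl : ∀ y ∈ f, y ∈ polyConeCl γ t u := fun y hy => by
        rw [← hclg]; exact hfsubclg hy
      have hkey : closure f = polyConeCl γ t' u' := by
        apply subset_antisymm
        · intro y hy
          have hy' := hy
          rw [hcl] at hy'
          have hyg : y ∈ polyConeCl γ t u := by rw [← hclg]; exact hy'.2
          refine ⟨fun k hk => ?_, fun k hk => hyg.2 k (Finset.mem_filter.mp hk).1⟩
          rcases Finset.mem_union.mp hk with hk | hk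
          · exact hyg.1 k hk
          · have hk' := Finset.mem_filter.mp hk
            have hz : ∀ w ∈ f, γ k w = 0 :=
              hf.zero_on (γ k) (fun w hw => (hfCl w hw).2 k hk'.1) hxf hk'.2
            exact closure_minimal hz
              (isClosed_eq (γ k).continuous_of_finiteDimensional continuous_const) hy
        · intro y hy
          rw [hcl]
          have hyclg : y ∈ closure g := by
            rw [hclg]
            refine ⟨fun k hk => hy.1 k (Finset.mem_union_left _ hk), fun k hk => ?_⟩
            by_cases h0 : γ k x = 0
            · exact (hy.1 k (Finset.mem_union_right _ (Finset.mem_filter.mpr ⟨hk, h0⟩))).ge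
            · exact hy.2 k (Finset.mem_filter.mpr ⟨hk, h0⟩)
          refine ⟨?_, hyclg⟩
          have hz : ∀ w ∈ e, α w = 0 :=
            (isRelOpenPolyCone_polyCone γ t' u').zero_on α
              (fun w hw => hαcl w (by rw [hclg]; exact hesubCl hw)) hxe hαx
          have hyce : y ∈ closure e := by rw [hcle]; exact hy
          exact closure_minimal hz
            (isClosed_eq α.continuous_of_finiteDimensional continuous_const) hyce
      have hfe : f = e := hf.eq_of_closure_eq (isRelOpenPolyCone_polyCone γ t' u')
        ⟨x, hxf⟩ ⟨x, hxe⟩ (hkey.trans hcle.symm)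
      right
      refine ⟨hfe ▸ he𝓕, ?_⟩
      intro y hyf
      have hye : y ∈ e := hfe ▸ hyf
      refine ⟨by rw [hclg]; exact hesubCl hye, fun hyg => ?_⟩
      rw [hgC] at hyg
      have h1 := hyg.2 k₀ hk₀u
      have h2 : γ k₀ y = 0 :=
        hye.1 k₀ (Finset.mem_union_right _ (Finset.mem_filter.mpr ⟨hk₀u, hk₀⟩))
      linarith
end

section
/- Let Φ ⊆ V* be a finite root system with base Δ and positive roots Φ⁺ as in the context. Let I ⊆ Δ. Then the following are equivalent: (a) no connected component of the Dynkin diagram of Δ is contained in I; (b) the set {α ∈ Φ⁺ : α ∉ span_ℝ(I)} spans span_ℝ(Φ) as a real vector space. -/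
variable {V : Type*} [AddCommGroup V] [Module ℝ V]

/-- The data of a finite (possibly non-reduced) root system `Φ` in the dual of the real
vector space `V`: every root `α` has a coroot `α∨` with `⟨α, α∨⟩ = 2`, the reflections
`s_α : χ ↦ χ - ⟨χ, α∨⟩ α` preserve `Φ`, and all pairings `⟨β, α∨⟩` are integers. -/
structure RootSystemData (V : Type*) [AddCommGroup V] [Module ℝ V] where
  Φ : Finset (Module.Dual ℝ V)
  coroot : Module.Dual ℝ V → V
  pairing_self : ∀ α ∈ Φ, α (coroot α) = 2
  reflection_mem : ∀ α ∈ Φ, ∀ β ∈ Φ, β - β (coroot α) • α ∈ Φ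
  pairing_int : ∀ α ∈ Φ, ∀ β ∈ Φ, ∃ m : ℤ, β (coroot α) = (m : ℝ)

/-- `Δ` is a base (system of simple roots) of the root system: it is linearly independent
and every root is either a nonnegative-integer or a nonpositive-integer combination of
elements of `Δ`. -/
structure RootSystemData.IsBase (R : RootSystemData V) (Δ : Finset (Module.Dual ℝ V)) :
    Prop where
  subset : Δ ⊆ R.Φ
  linearIndependent :
    LinearIndependent ℝ (fun a : (Δ : Set (Module.Dual ℝ V)) => (a : Module.Dual ℝ V))
  decomposition : ∀ α ∈ R.Φ,
    (∃ c : Module.Dual ℝ V → ℕ, α = ∑ β ∈ Δ, (c β : ℝ) • β) ∨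
    (∃ c : Module.Dual ℝ V → ℕ, α = -∑ β ∈ Δ, (c β : ℝ) • β)

/-- The set of positive roots with respect to the base `Δ`: the roots which are
nonnegative-integer combinations of simple roots. -/
def RootSystemData.posRoots (R : RootSystemData V) (Δ : Finset (Module.Dual ℝ V)) :
    Set (Module.Dual ℝ V) :=
  {α | α ∈ R.Φ ∧ ∃ c : Module.Dual ℝ V → ℕ, α = ∑ β ∈ Δ, (c β : ℝ) • β}

/-- The Dynkin diagram of the base `Δ`: two distinct simple roots are adjacent if and
only if they pair nontrivially against each other's coroots. -/
def RootSystemData.dynkin (R : RootSystemData V) (Δ : Finset (Module.Dual ℝ V)) :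
    SimpleGraph {a // a ∈ Δ} where
  Adj a b := a ≠ b ∧
    ((a : Module.Dual ℝ V) (R.coroot (b : Module.Dual ℝ V)) ≠ 0 ∨
      (b : Module.Dual ℝ V) (R.coroot (a : Module.Dual ℝ V)) ≠ 0)
  symm := ⟨fun a b h => ⟨h.1.symm, h.2.symm⟩⟩
  loopless := ⟨fun a h => h.1 rfl⟩

/-! Work in the coordinates of `V*` with respect to the simple roots. Reflecting a root
in a simple root of `I` changes only its coordinate at that root, so it maps the positive
roots outside `span I` to themselves. Walking from a simple root `δ` to a simple root outside
`I` along the Dynkin diagram and reflecting at each step produces such a root `θ` with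
`⟨θ, δ∨⟩ ≠ 0`; then `δ` is a multiple of `θ - s_δ θ`, so it lies in their span.

Conversely, the support of a positive root lies in a single connected component: a positive
root whose support meets two components pairs positively with some simple coroot `β∨`, and
`s_β` lowers its height while keeping it positive and its support still split. So if a
component lies in `I`, the coordinate at one of its vertices vanishes on every positive root
outside `span I`, but not on the simple roots.

Without an invariant form, the symmetry of the Cartan integers (`⟨α, β∨⟩` and `⟨β, α∨⟩`
vanish together and have the same sign) comes from finiteness of `Φ`: otherwise the orbit of
a root under `-s_β s_α` would be unbounded. -/

theorem LinearIndepOn.exists_coord {K M : Type*} [Field K] [AddCommGroup M] [Module K M]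
    {s : Set M} (hs : LinearIndepOn K id s) :
    ∃ f : M → Module.Dual K M, ∀ x ∈ s, f x x = 1 ∧ ∀ y ∈ s, y ≠ x → f x y = 0 := by
  classical
  let B := Module.Basis.extend hs
  have hB : ∀ x (hx : x ∈ s), B ⟨x, hs.subset_extend _ hx⟩ = x := fun x hx =>
    Module.Basis.extend_apply_self hs _
  refine ⟨fun x => if hx : x ∈ s then B.coord ⟨x, hs.subset_extend _ hx⟩ else 0,
    fun x hx => ⟨?_, fun y hy hyx => ?_⟩⟩
  · conv_lhs => arg 2; rw [← hB x hx]
    simp [dif_pos hx]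
  · conv_lhs => arg 2; rw [← hB y hy]
    simp [dif_pos hx, Subtype.ext_iff, hyx]

namespace RootSystemData

variable (R : RootSystemData V) {α β : Module.Dual ℝ V}

lemma neg_mem (hα : α ∈ R.Φ) : -α ∈ R.Φ := by
  simpa [R.pairing_self α hα, two_smul] using R.reflection_mem α hα α hα

lemma exists_nat_abs_apply_lt (w : V) : ∃ n : ℕ, ∀ x ∈ R.Φ, |x w| < n := by
  obtain ⟨n, hn⟩ := exists_nat_gt (∑ x ∈ R.Φ, |x w|)
  exact ⟨n, fun x hx => (Finset.single_le_sum (fun y _ => abs_nonneg (y w)) hx).trans_lt hn⟩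

lemma one_le_abs_pairing (hα : α ∈ R.Φ) (hβ : β ∈ R.Φ) (h : β (R.coroot α) ≠ 0) :
    1 ≤ |β (R.coroot α)| := by
  obtain ⟨m, hm⟩ := R.pairing_int α hα β hβ
  rw [hm] at h ⊢
  exact_mod_cast Int.one_le_abs (by exact_mod_cast h)

lemma one_le_pairing (hα : α ∈ R.Φ) (hβ : β ∈ R.Φ) (h : 0 < β (R.coroot α)) :
    1 ≤ β (R.coroot α) := by
  obtain ⟨m, hm⟩ := R.pairing_int α hα β hβ
  rw [hm] at h ⊢
  exact_mod_cast (show (0 : ℤ) < m by exact_mod_cast h)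

/-- The root `-s_β (s_α (p α + q β))`, written in the coordinates `p, q`. -/
lemma neg_reflection_reflection_mem (hα : α ∈ R.Φ) (hβ : β ∈ R.Φ) {p q : ℝ}
    (h : p • α + q • β ∈ R.Φ) :
    (p + q * β (R.coroot α)) • α + (q - (p + q * β (R.coroot α)) * α (R.coroot β)) • β ∈
      R.Φ := by
  convert R.neg_mem (R.reflection_mem β hβ _ (R.reflection_mem α hα _ h)) using 1
  simp only [LinearMap.add_apply, LinearMap.sub_apply,
    LinearMap.smul_apply, smul_eq_mul, R.pairing_self α hα, R.pairing_self β hβ]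
  module

lemma pairing_eq_zero_of_pairing_eq_zero (hα : α ∈ R.Φ) (hβ : β ∈ R.Φ)
    (h : α (R.coroot β) = 0) : β (R.coroot α) = 0 := by
  by_contra ha
  set a := β (R.coroot α)
  have horbit : ∀ n : ℕ, (n * a) • α + (1 : ℝ) • β ∈ R.Φ := by
    intro n
    induction n with
    | zero => simpa using hβ
    | succ n ih =>
      convert R.neg_reflection_reflection_mem hα hβ ih using 3
      · push_cast; ring
      · simp [h]
  obtain ⟨n, hn⟩ := R.exists_nat_abs_apply_lt (R.coroot α)
  have hval : ((n * a) • α + (1 : ℝ) • β) (R.coroot α) = (2 * n + 1) * a := by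
    simp [R.pairing_self α hα, a]; ring
  have h1 := R.one_le_abs_pairing hα hβ ha
  have h2 := hn _ (horbit n)
  rw [hval, abs_mul, abs_of_nonneg (by positivity)] at h2
  nlinarith

lemma pairing_pos_of_pairing_pos (hα : α ∈ R.Φ) (hβ : β ∈ R.Φ)
    (h : 0 < α (R.coroot β)) : 0 < β (R.coroot α) := by
  by_contra! ha
  have ha' : β (R.coroot α) ≤ -1 := by
    have hne : β (R.coroot α) ≠ 0 := fun h0 =>
      h.ne' (R.pairing_eq_zero_of_pairing_eq_zero hβ hα h0)
    have := R.one_le_abs_pairing hα hβ hne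
    rw [abs_of_nonpos ha] at this
    linarith
  have hb := R.one_le_pairing hβ hα h
  have horbit : ∀ n : ℕ, ∃ p q : ℝ, 0 ≤ p ∧ n + 1 ≤ q ∧ p • β + q • α ∈ R.Φ := by
    intro n
    induction n with
    | zero => exact ⟨0, 1, le_rfl, by simp, by simpa using hα⟩
    | succ n ih =>
      obtain ⟨p, q, hp, hq, hmem⟩ := ih
      refine ⟨_, _, ?_, ?_, R.neg_reflection_reflection_mem hβ hα hmem⟩
      · nlinarith
      · push_cast
        nlinarith [mul_nonneg (by nlinarith : 0 ≤ p + q * α (R.coroot β))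
          (by linarith : 0 ≤ -1 - β (R.coroot α))]
  obtain ⟨n, hn⟩ := R.exists_nat_abs_apply_lt (R.coroot β)
  obtain ⟨p, q, hp, hq, hmem⟩ := horbit n
  have hval : (p • β + q • α) (R.coroot β) = 2 * p + q * α (R.coroot β) := by
    simp [R.pairing_self β hβ]; ring
  have := hn _ hmem
  rw [hval, abs_of_nonneg (by nlinarith)] at this
  nlinarith

variable {R} {Δ : Finset (Module.Dual ℝ V)}

lemma dynkin_adj_pairing_ne_zero (hΔ : Δ ⊆ R.Φ) {a b : {a // a ∈ Δ}}
    (h : (R.dynkin Δ).Adj a b) : (a : Module.Dual ℝ V) (R.coroot b) ≠ 0 :=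
  h.2.elim id fun hba hab => hba (R.pairing_eq_zero_of_pairing_eq_zero (hΔ a.2) (hΔ b.2) hab)

/-- For a pseudo-parabolic subgroup of type `I`, these are the roots of its unipotent
radical. -/
def posRootsOutsideSpan (R : RootSystemData V) (Δ I : Finset (Module.Dual ℝ V)) :
    Set (Module.Dual ℝ V) :=
  {α | α ∈ R.posRoots Δ ∧ α ∉ Submodule.span ℝ (I : Set (Module.Dual ℝ V))}

namespace IsBase

variable {I : Finset (Module.Dual ℝ V)} {θ β γ δ : Module.Dual ℝ V}

/-- Coordinates with respect to the simple roots; their values off `span Δ` are arbitrary. -/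
noncomputable def coord (hΔ : R.IsBase Δ) : Module.Dual ℝ V → Module.Dual ℝ (Module.Dual ℝ V) :=
  (LinearIndepOn.exists_coord (s := (Δ : Set (Module.Dual ℝ V))) hΔ.linearIndependent).choose

lemma coord_self (hΔ : R.IsBase Δ) (hδ : δ ∈ Δ) : hΔ.coord δ δ = 1 :=
  ((LinearIndepOn.exists_coord (s := (Δ : Set (Module.Dual ℝ V)))
    hΔ.linearIndependent).choose_spec δ hδ).1

lemma coord_of_ne (hΔ : R.IsBase Δ) (hδ : δ ∈ Δ) (hγ : γ ∈ Δ) (h : γ ≠ δ) : hΔ.coord δ γ = 0 :=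
  ((LinearIndepOn.exists_coord (s := (Δ : Set (Module.Dual ℝ V)))
    hΔ.linearIndependent).choose_spec δ hδ).2 γ hγ h

lemma coord_sum (hΔ : R.IsBase Δ) (c : Module.Dual ℝ V → ℝ) (hδ : δ ∈ Δ) :
    hΔ.coord δ (∑ β ∈ Δ, c β • β) = c δ := by
  rw [map_sum, Finset.sum_eq_single_of_mem δ hδ fun β hβ hne => by
    rw [map_smul, hΔ.coord_of_ne hδ hβ hne, smul_zero]]
  rw [map_smul, hΔ.coord_self hδ, smul_eq_mul, mul_one]

lemma exists_eq_sum (hΔ : R.IsBase Δ) (hθ : θ ∈ R.Φ) :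
    ∃ c : Module.Dual ℝ V → ℝ, θ = ∑ β ∈ Δ, c β • β := by
  rcases hΔ.decomposition θ hθ with ⟨c, hc⟩ | ⟨c, hc⟩
  · exact ⟨_, hc⟩
  · exact ⟨fun β => -(c β : ℝ), by
      rw [hc, ← Finset.sum_neg_distrib]
      exact Finset.sum_congr rfl fun β _ => (neg_smul _ β).symm⟩

lemma sum_coord_smul (hΔ : R.IsBase Δ) (hθ : θ ∈ R.Φ) : ∑ β ∈ Δ, hΔ.coord β θ • β = θ := by
  obtain ⟨c, rfl⟩ := hΔ.exists_eq_sum hθ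
  exact Finset.sum_congr rfl fun β hβ => by rw [hΔ.coord_sum c hβ]

lemma apply_eq_sum_coord (hΔ : R.IsBase Δ) (hθ : θ ∈ R.Φ) (w : V) :
    θ w = ∑ β ∈ Δ, hΔ.coord β θ * β w := by
  conv_lhs => rw [← hΔ.sum_coord_smul hθ]
  simp

lemma mem_span_iff (hΔ : R.IsBase Δ) (hI : I ⊆ Δ) (hθ : θ ∈ R.Φ) :
    θ ∈ Submodule.span ℝ (I : Set (Module.Dual ℝ V)) ↔ ∀ δ ∈ Δ, δ ∉ I → hΔ.coord δ θ = 0 := by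
  refine ⟨fun h δ hδ hδI => ?_, fun h => ?_⟩
  · have hle : Submodule.span ℝ (I : Set (Module.Dual ℝ V)) ≤ LinearMap.ker (hΔ.coord δ) :=
      Submodule.span_le.2 fun γ hγ => hΔ.coord_of_ne hδ (hI hγ) (ne_of_mem_of_not_mem hγ hδI)
    exact hle h
  · rw [← hΔ.sum_coord_smul hθ,
      ← Finset.sum_subset hI fun δ hδ hδI => by rw [h δ hδ hδI, zero_smul]]
    exact Submodule.sum_mem _ fun δ hδ => Submodule.smul_mem _ _ (Submodule.subset_span hδ)

lemma coord_nonneg (hΔ : R.IsBase Δ) (hθ : θ ∈ R.posRoots Δ) (hδ : δ ∈ Δ) : 0 ≤ hΔ.coord δ θ := by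
  obtain ⟨-, c, rfl⟩ := hθ
  rw [hΔ.coord_sum _ hδ]
  positivity

lemma mem_posRoots_of_coord_pos (hΔ : R.IsBase Δ) (hθ : θ ∈ R.Φ) (hδ : δ ∈ Δ)
    (h : 0 < hΔ.coord δ θ) : θ ∈ R.posRoots Δ := by
  refine ⟨hθ, (hΔ.decomposition θ hθ).resolve_right ?_⟩
  rintro ⟨c, rfl⟩
  rw [map_neg, hΔ.coord_sum _ hδ] at h
  linarith [(c δ).cast_nonneg (α := ℝ)]

lemma simple_mem_posRootsOutsideSpan (hΔ : R.IsBase Δ) (hI : I ⊆ Δ) (hδ : δ ∈ Δ) (hδI : δ ∉ I) :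
    δ ∈ R.posRootsOutsideSpan Δ I := by
  have hδΦ := hΔ.subset hδ
  refine ⟨hΔ.mem_posRoots_of_coord_pos hδΦ hδ (by rw [hΔ.coord_self hδ]; exact one_pos),
    fun h => ?_⟩
  have := (hΔ.mem_span_iff hI hδΦ).1 h δ hδ hδI
  rw [hΔ.coord_self hδ] at this
  exact one_ne_zero this

lemma exists_coord_pos (hΔ : R.IsBase Δ) (hI : I ⊆ Δ) (hθ : θ ∈ R.posRootsOutsideSpan Δ I) :
    ∃ δ ∈ Δ, δ ∉ I ∧ 0 < hΔ.coord δ θ := by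
  by_contra! h
  exact hθ.2 <| (hΔ.mem_span_iff hI hθ.1.1).2 fun δ hδ hδI =>
    (h δ hδ hδI).antisymm (hΔ.coord_nonneg hθ.1 hδ)

/-- Reflecting in a simple root of `I` leaves the coordinates outside `I` unchanged. -/
lemma reflection_mem_posRootsOutsideSpan (hΔ : R.IsBase Δ) (hI : I ⊆ Δ)
    (hθ : θ ∈ R.posRootsOutsideSpan Δ I) (hγ : γ ∈ I) :
    θ - θ (R.coroot γ) • γ ∈ R.posRootsOutsideSpan Δ I := by
  obtain ⟨δ, hδ, hδI, hpos⟩ := hΔ.exists_coord_pos hI hθ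
  have hcoord : hΔ.coord δ (θ - θ (R.coroot γ) • γ) = hΔ.coord δ θ := by
    rw [map_sub, map_smul, hΔ.coord_of_ne hδ (hI hγ) (ne_of_mem_of_not_mem hγ hδI), smul_zero,
      sub_zero]
  refine ⟨hΔ.mem_posRoots_of_coord_pos (R.reflection_mem γ (hΔ.subset (hI hγ)) θ hθ.1.1) hδ
    (hcoord ▸ hpos), fun h => hθ.2 ?_⟩
  simpa using Submodule.add_mem _ h (Submodule.smul_mem _ (θ (R.coroot γ))
    (Submodule.subset_span hγ))

lemma mem_span_posRootsOutsideSpan_of_pairing_ne_zero (hΔ : R.IsBase Δ) (hI : I ⊆ Δ) (hγ : γ ∈ I)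
    (hθ : θ ∈ R.posRootsOutsideSpan Δ I) (h : θ (R.coroot γ) ≠ 0) :
    γ ∈ Submodule.span ℝ (R.posRootsOutsideSpan Δ I) := by
  rw [← inv_smul_smul₀ h γ, ← sub_sub_cancel θ (θ (R.coroot γ) • γ)]
  exact Submodule.smul_mem _ _ (Submodule.sub_mem _ (Submodule.subset_span hθ)
    (Submodule.subset_span (hΔ.reflection_mem_posRootsOutsideSpan hI hθ hγ)))

lemma exists_pairing_ne_zero_of_reachable (hΔ : R.IsBase Δ) (hI : I ⊆ Δ) {a b : {a // a ∈ Δ}}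
    (hab : (R.dynkin Δ).Reachable a b) (hb : (b : Module.Dual ℝ V) ∉ I) :
    ∃ θ ∈ R.posRootsOutsideSpan Δ I, θ (R.coroot a) ≠ 0 := by
  obtain ⟨p⟩ := hab
  induction p with
  | @nil u =>
    refine ⟨u, hΔ.simple_mem_posRootsOutsideSpan hI u.2 hb, ?_⟩
    rw [R.pairing_self u (hΔ.subset u.2)]
    exact two_ne_zero
  | @cons u v _ huv _ ih =>
    have hvu := dynkin_adj_pairing_ne_zero hΔ.subset huv.symm
    by_cases hvI : (v : Module.Dual ℝ V) ∈ I
    · obtain ⟨θ, hθ, hθv⟩ := ih hb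
      by_cases hθu : θ (R.coroot u) = 0
      · refine ⟨_, hΔ.reflection_mem_posRootsOutsideSpan hI hθ hvI, ?_⟩
        simpa [hθu] using And.intro hθv hvu
      · exact ⟨θ, hθ, hθu⟩
    · exact ⟨v, hΔ.simple_mem_posRootsOutsideSpan hI v.2 hvI, hvu⟩

lemma simple_mem_span_posRootsOutsideSpan (hΔ : R.IsBase Δ) (hI : I ⊆ Δ) {a b : {a // a ∈ Δ}}
    (hab : (R.dynkin Δ).Reachable a b) (hb : (b : Module.Dual ℝ V) ∉ I) :
    (a : Module.Dual ℝ V) ∈ Submodule.span ℝ (R.posRootsOutsideSpan Δ I) := by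
  by_cases haI : (a : Module.Dual ℝ V) ∈ I
  · obtain ⟨θ, hθ, hθa⟩ := hΔ.exists_pairing_ne_zero_of_reachable hI hab hb
    exact hΔ.mem_span_posRootsOutsideSpan_of_pairing_ne_zero hI haI hθ hθa
  · exact Submodule.subset_span (hΔ.simple_mem_posRootsOutsideSpan hI a.2 haI)

noncomputable def height (hΔ : R.IsBase Δ) : Module.Dual ℝ (Module.Dual ℝ V) := ∑ δ ∈ Δ, hΔ.coord δ

lemma height_simple (hΔ : R.IsBase Δ) (hβ : β ∈ Δ) : hΔ.height β = 1 := by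
  rw [height, LinearMap.coe_sum, Finset.sum_apply,
    Finset.sum_eq_single_of_mem β hβ fun δ hδ hne => hΔ.coord_of_ne hδ hβ hne.symm,
    hΔ.coord_self hβ]

def Straddles (hΔ : R.IsBase Δ) (P : Module.Dual ℝ V → Prop) (θ : Module.Dual ℝ V) : Prop :=
  ∃ γ ∈ Δ, ∃ δ ∈ Δ, hΔ.coord γ θ ≠ 0 ∧ hΔ.coord δ θ ≠ 0 ∧ ¬(P γ ↔ P δ)

lemma exists_pairing_pos (hΔ : R.IsBase Δ) (hθ : θ ∈ R.posRoots Δ) :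
    ∃ β ∈ Δ, 0 < β (R.coroot θ) := by
  by_contra! h
  have : θ (R.coroot θ) ≤ 0 := by
    rw [hΔ.apply_eq_sum_coord hθ.1]
    exact Finset.sum_nonpos fun β hβ =>
      mul_nonpos_of_nonneg_of_nonpos (hΔ.coord_nonneg hθ hβ) (h β hβ)
  rw [R.pairing_self θ hθ.1] at this
  norm_num at this

/-- Some simple coroot `β∨` pairs positively with `θ`, and `s_β θ` is again positive and
straddling, of smaller height: it keeps the coordinate of `θ` at a simple root on the other
side of `P` from `β`, and since it pairs to `-⟨θ, β∨⟩ ≠ 0` with `β∨` its support meets the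
side of `β`. -/
lemma exists_height_lt_of_straddles (hΔ : R.IsBase Δ) {P : Module.Dual ℝ V → Prop}
    (hP : ∀ β ∈ Δ, ∀ γ ∈ Δ, γ (R.coroot β) ≠ 0 → (P γ ↔ P β))
    (hθ : θ ∈ R.posRoots Δ) (hs : hΔ.Straddles P θ) :
    ∃ θ' ∈ R.posRoots Δ, hΔ.Straddles P θ' ∧ hΔ.height θ' < hΔ.height θ := by
  obtain ⟨γ, hγ, δ, hδ, hγθ, hδθ, hγδ⟩ := hs
  obtain ⟨β, hβ, hβθ⟩ := hΔ.exists_pairing_pos hθ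
  have hβΦ := hΔ.subset hβ
  set t := θ (R.coroot β)
  have ht : 1 ≤ t := R.one_le_pairing hβΦ hθ.1 (R.pairing_pos_of_pairing_pos hβΦ hθ.1 hβθ)
  obtain ⟨ε, hε, hεθ, hεβ⟩ : ∃ ε ∈ Δ, hΔ.coord ε θ ≠ 0 ∧ ¬(P ε ↔ P β) := by
    by_cases h : P γ ↔ P β
    · exact ⟨δ, hδ, hδθ, fun h' => hγδ (h.trans h'.symm)⟩
    · exact ⟨γ, hγ, hγθ, h⟩
  have hcoord : hΔ.coord ε (θ - t • β) = hΔ.coord ε θ := by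
    rw [map_sub, map_smul, hΔ.coord_of_ne hε hβ fun h => hεβ (h ▸ Iff.rfl), smul_zero,
      sub_zero]
  have hθ' : θ - t • β ∈ R.posRoots Δ :=
    hΔ.mem_posRoots_of_coord_pos (R.reflection_mem β hβΦ θ hθ.1) hε
      (hcoord ▸ (hΔ.coord_nonneg hθ hε).lt_of_ne' hεθ)
  obtain ⟨γ', hγ', hγ'θ', hγ'β⟩ :
      ∃ γ' ∈ Δ, hΔ.coord γ' (θ - t • β) ≠ 0 ∧ γ' (R.coroot β) ≠ 0 := by
    have hne : (θ - t • β) (R.coroot β) ≠ 0 := by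
      simp only [LinearMap.sub_apply, LinearMap.smul_apply, smul_eq_mul, R.pairing_self β hβΦ]
      linarith
    rw [hΔ.apply_eq_sum_coord hθ'.1] at hne
    obtain ⟨γ', hγ', h⟩ := Finset.exists_ne_zero_of_sum_ne_zero hne
    exact ⟨γ', hγ', left_ne_zero_of_mul h, right_ne_zero_of_mul h⟩
  refine ⟨θ - t • β, hθ', ⟨γ', hγ', ε, hε, hγ'θ', hcoord ▸ hεθ,
    fun h => hεβ (h.symm.trans (hP β hβ γ' hγ' hγ'β))⟩, ?_⟩
  rw [map_sub, map_smul, hΔ.height_simple hβ, smul_eq_mul, mul_one]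
  linarith

lemma not_straddles (hΔ : R.IsBase Δ) {P : Module.Dual ℝ V → Prop}
    (hP : ∀ β ∈ Δ, ∀ γ ∈ Δ, γ (R.coroot β) ≠ 0 → (P γ ↔ P β))
    (hθ : θ ∈ R.posRoots Δ) : ¬ hΔ.Straddles P θ := by
  classical
  intro hs
  obtain ⟨θ₀, hθ₀, hmin⟩ :=
    (R.Φ.filter fun θ => θ ∈ R.posRoots Δ ∧ hΔ.Straddles P θ).exists_min_image hΔ.height
      ⟨θ, Finset.mem_filter.2 ⟨hθ.1, hθ, hs⟩⟩
  obtain ⟨-, hθ₀pos, hθ₀s⟩ := Finset.mem_filter.1 hθ₀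
  obtain ⟨θ', hθ', hs', hlt⟩ := hΔ.exists_height_lt_of_straddles hP hθ₀pos hθ₀s
  exact (hmin θ' (Finset.mem_filter.2 ⟨hθ'.1, hθ', hs'⟩)).not_gt hlt

lemma coord_eq_zero_of_forall_reachable_mem (hΔ : R.IsBase Δ) (hI : I ⊆ Δ) {a : {a // a ∈ Δ}}
    (ha : ∀ b, (R.dynkin Δ).Reachable a b → (b : Module.Dual ℝ V) ∈ I)
    (hθ : θ ∈ R.posRootsOutsideSpan Δ I) : hΔ.coord a θ = 0 := by
  by_contra hθa
  let P : Module.Dual ℝ V → Prop := fun x => ∃ hx : x ∈ Δ, (R.dynkin Δ).Reachable a ⟨x, hx⟩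
  have hP : ∀ β ∈ Δ, ∀ γ ∈ Δ, γ (R.coroot β) ≠ 0 → (P γ ↔ P β) := by
    intro β hβ γ hγ h
    have hγβ : (R.dynkin Δ).Reachable ⟨γ, hγ⟩ ⟨β, hβ⟩ := by
      by_cases hne : γ = β
      · subst hne; rfl
      · exact SimpleGraph.Adj.reachable ⟨fun h' => hne (congrArg Subtype.val h'), Or.inl h⟩
    exact ⟨fun ⟨_, hr⟩ => ⟨hβ, hr.trans hγβ⟩, fun ⟨_, hr⟩ => ⟨hγ, hr.trans hγβ.symm⟩⟩
  refine hθ.2 ((hΔ.mem_span_iff hI hθ.1.1).2 fun δ hδ hδI => ?_)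
  by_contra hδθ
  exact hΔ.not_straddles hP hθ.1
    ⟨a, a.2, δ, hδ, hθa, hδθ, fun h => hδI (ha _ (h.1 ⟨a.2, .refl _⟩).2)⟩

end IsBase

end RootSystemData

theorem nondegenerateType_iff_general
    (R : RootSystemData V) {Δ : Finset (Module.Dual ℝ V)} (hΔ : R.IsBase Δ)
    {I : Finset (Module.Dual ℝ V)} (hI : I ⊆ Δ) :
    (∀ a : {a // a ∈ Δ}, ∃ b : {a // a ∈ Δ},
        (R.dynkin Δ).Reachable a b ∧ (b : Module.Dual ℝ V) ∉ I) ↔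
      Submodule.span ℝ
          {α | α ∈ R.posRoots Δ ∧ α ∉ Submodule.span ℝ (I : Set (Module.Dual ℝ V))} =
        Submodule.span ℝ (R.Φ : Set (Module.Dual ℝ V)) := by
  change _ ↔ Submodule.span ℝ (R.posRootsOutsideSpan Δ I) = _
  constructor
  · intro h
    refine le_antisymm (Submodule.span_mono fun α hα => hα.1.1) (Submodule.span_le.2 fun α hα => ?_)
    obtain ⟨c, rfl⟩ := hΔ.exists_eq_sum hα
    refine Submodule.sum_mem _ fun β hβ => Submodule.smul_mem _ _ ?_
    obtain ⟨b, hab, hb⟩ := h ⟨β, hβ⟩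
    exact hΔ.simple_mem_span_posRootsOutsideSpan hI hab hb
  · intro h
    by_contra! hcomp
    obtain ⟨a, ha⟩ := hcomp
    have hle : Submodule.span ℝ (R.posRootsOutsideSpan Δ I) ≤ LinearMap.ker (hΔ.coord a) :=
      Submodule.span_le.2 fun θ hθ => hΔ.coord_eq_zero_of_forall_reachable_mem hI ha hθ
    have ha_mem := hle (h ▸ Submodule.subset_span (hΔ.subset a.2))
    rw [LinearMap.mem_ker, hΔ.coord_self a.2] at ha_mem
    exact one_ne_zero ha_mem

/-- Let `Φ` be a root system with base `Δ` and let `I ⊆ Δ`. Then no connected component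
of the Dynkin diagram of `Δ` is contained in `I` (i.e. every vertex of `Δ` can reach a
vertex outside `I`) if and only if the positive roots not lying in the span of `I` span
the span of `Φ`. -/
theorem nondegenerateType_iff [FiniteDimensional ℝ V]
    (R : RootSystemData V) {Δ : Finset (Module.Dual ℝ V)} (hΔ : R.IsBase Δ)
    {I : Finset (Module.Dual ℝ V)} (hI : I ⊆ Δ) :
    (∀ a : {a // a ∈ Δ}, ∃ b : {a // a ∈ Δ},
        (R.dynkin Δ).Reachable a b ∧ (b : Module.Dual ℝ V) ∉ I) ↔
      Submodule.span ℝ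
          {α | α ∈ R.posRoots Δ ∧ α ∉ Submodule.span ℝ (I : Set (Module.Dual ℝ V))} =
        Submodule.span ℝ (R.Φ : Set (Module.Dual ℝ V)) :=
  nondegenerateType_iff_general R hΔ hI
end

section
/- Let Δ be a finite simple graph and let J, T ⊆ Δ be subsets of its vertex set. Let T̃ be the union of the connected components of T that meet Δ \ J. Then the following are equivalent: (1) there exists a subset I ⊆ Δ, none of whose connected components is contained in J, such that T = I ∪ (J ∩ I^⊥) (this union being automatically disjoint, since no vertex of I^⊥ lies in I); (2) every vertex α ∈ Δ such that α ∈ J and α ∈ T̃^⊥ belongs to T. -/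
variable {α : Type*} [Fintype α]

/-- `v` and `w` are connected within the subset `s` of the vertices of `G`: both lie in
`s` and they are joined by a walk in the subgraph of `G` induced on `s`.  In particular,
`w` lies in the connected component of `v` in the induced subgraph on `s`. -/
def SimpleGraph.ReachableIn (G : SimpleGraph α) (s : Set α) (v w : α) : Prop :=
  ∃ (hv : v ∈ s) (hw : w ∈ s), (G.induce s).Reachable ⟨v, hv⟩ ⟨w, hw⟩

/-- `s^⊥`: the set of vertices not in `s` and adjacent to no element of `s`. -/
def SimpleGraph.perp (G : SimpleGraph α) (s : Set α) : Set α :=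
  {v | v ∉ s ∧ ∀ w ∈ s, ¬ G.Adj v w}

namespace SimpleGraph

lemma reachableIn_refl (G : SimpleGraph α) {s : Set α} {v : α} (hv : v ∈ s) :
    G.ReachableIn s v v := ⟨hv, hv, Reachable.refl _⟩

lemma reachableIn_trans (G : SimpleGraph α) {s : Set α} {u v w : α}
    (h1 : G.ReachableIn s u v) (h2 : G.ReachableIn s v w) : G.ReachableIn s u w := by
  obtain ⟨hu, hv, h1⟩ := h1
  obtain ⟨hv', hw, h2⟩ := h2
  exact ⟨hu, hw, h1.trans h2⟩

lemma reachableIn_mono (G : SimpleGraph α) {s t : Set α} (hst : s ⊆ t) {v w : α}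
    (h : G.ReachableIn s v w) : G.ReachableIn t v w := by
  obtain ⟨hv, hw, h⟩ := h
  exact ⟨hst hv, hst hw, h.map ⟨Set.inclusion hst, fun ha => ha⟩⟩

lemma reachableIn_shrink_aux (G : SimpleGraph α) {s : Set α} :
    ∀ {x y : s} (_ : (G.induce s).Walk x y),
      G.ReachableIn {u | G.ReachableIn s u y.1} x.1 y.1 := by
  intro x y p
  induction p with
  | nil =>
    exact G.reachableIn_refl (G.reachableIn_refl (Subtype.coe_prop _))
  | @cons a b c h p ih =>
    obtain ⟨hb, hc, hrc⟩ := ih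
    have ha : a.1 ∈ {u | G.ReachableIn s u c.1} := ⟨a.2, c.2, ⟨SimpleGraph.Walk.cons h p⟩⟩
    have step : G.ReachableIn {u | G.ReachableIn s u c.1} a.1 b.1 :=
      ⟨ha, hb, SimpleGraph.Adj.reachable (show G.Adj a.1 b.1 from h)⟩
    exact G.reachableIn_trans step ⟨hb, hc, hrc⟩

lemma reachableIn_shrink (G : SimpleGraph α) {s : Set α} {v w : α}
    (h : G.ReachableIn s v w) : G.ReachableIn {u | G.ReachableIn s u w} v w := by
  obtain ⟨hv, hw, ⟨p⟩⟩ := h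
  exact G.reachableIn_shrink_aux p

end SimpleGraph

/-- Let `Δ` be a finite simple graph (with vertex type `α` and edge relation `G`) and let
`J, T` be sets of vertices.  Let `T̃` be the union of the connected components of `T`
(for the induced subgraph structure) that meet the complement of `J`.  Then the following
are equivalent:
(1) there exists a set of vertices `I`, none of whose connected components is contained
in `J` (i.e. every vertex of `I` can reach, within `I`, a vertex outside `J`), such
that `T = I ∪ (J ∩ I^⊥)`;
(2) every vertex belonging to `J` and to `T̃^⊥` belongs to `T`. -/
theorem relevant_iff (G : SimpleGraph α) (J T : Set α) :
    (∃ I : Set α,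
        (∀ v ∈ I, ∃ w, G.ReachableIn I v w ∧ w ∉ J) ∧
        T = I ∪ (J ∩ G.perp I)) ↔
      ∀ a : α, a ∈ J →
        a ∈ G.perp {v | v ∈ T ∧ ∃ w, G.ReachableIn T v w ∧ w ∉ J} → a ∈ T := by
  set Tt : Set α := {v | v ∈ T ∧ ∃ w, G.ReachableIn T v w ∧ w ∉ J} with hTt
  constructor
  · rintro ⟨I, hI, hT⟩ a haJ ⟨haTt, haAdj⟩
    have hIsubT : I ⊆ T := by rw [hT]; exact Set.subset_union_left
    have hITt : I ⊆ Tt := by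
      intro v hv
      obtain ⟨w, hr, hwJ⟩ := hI v hv
      exact ⟨hIsubT hv, w, G.reachableIn_mono hIsubT hr, hwJ⟩
    rw [hT]
    right
    refine ⟨haJ, ?_, fun w hw => haAdj w (hITt hw)⟩
    exact fun haI => haTt (hITt haI)
  · intro h2
    refine ⟨Tt, ?_, ?_⟩
    · rintro v ⟨hvT, w, hr, hwJ⟩
      refine ⟨w, ?_, hwJ⟩
      have := G.reachableIn_shrink hr
      refine G.reachableIn_mono ?_ this
      rintro u ⟨huT, _, hru⟩
      exact ⟨huT, w, ⟨huT, hr.2.1, hru⟩, hwJ⟩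
    · ext t
      constructor
      · intro htT
        by_cases htTt : t ∈ Tt
        · exact Or.inl htTt
        · right
          have htJ : t ∈ J := by
            by_contra htJ
            exact htTt ⟨htT, t, G.reachableIn_refl htT, htJ⟩
          refine ⟨htJ, htTt, ?_⟩
          rintro u ⟨huT, w, hr, hwJ⟩ hadj
          exact htTt ⟨htT, w,
            G.reachableIn_trans ⟨htT, huT, SimpleGraph.Adj.reachable (by exact hadj)⟩ hr, hwJ⟩
      · rintro (h | h)
        · exact h.1
        · exact h2 t h.1 h.2
end
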